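/- arXiv:0809.0533 — 4 statements merged into one kernel-verified Lean document; each statement's English description precedes it below -/
import Mathlib

section
/- Let r_I, R_p > 0 and define I(ρ) = 2π ∫₀^ρ t · S_I(t, R_p, r_I)/(π R_p²) dt. Then for every ρ with |R_p − r_I| < ρ < R_p + r_I, one has I(ρ) = (1/2)π r_I² + ρ²·arccos((R_p² + ρ² − r_I²)/(2 R_p ρ)) + (r_I² ρ²/R_p²)·arccos((r_I² + ρ² − R_p²)/(2 r_I ρ)) − r_I²·arcsin((r_I² + R_p² − ρ²)/(2 r_I R_p)) − ((ρ² + r_I² + R_p²)/(4 R_p²))·√((r_I + R_p + ρ)(r_I + R_p − ρ)(r_I − R_p + ρ)(R_p − r_I + ρ)). -/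
/-!
Slicing the lens by vertical lines gives its area as two circular-segment integrals, whence the
classical lens formula for `|R_p - r_I| < t < R_p + r_I`; for `t ≤ |R_p - r_I|` one disk contains
the other and `S_I` is constant. The closed form is an antiderivative of `2 t S_I(t) / R_p²` on
the lens range (checked by differentiation), and its value `π min(R_p, r_I)² (R_p - r_I)² / R_p²`
at `|R_p - r_I|` is exactly the contribution of the nested range.
-/

open MeasureTheory Metric Real

/-- `SI d r₁ r₂` is the area (two-dimensional Lebesgue measure) of the intersection of
two closed disks in the plane of radii `r₁` and `r₂` whose centers are at distance `d`. -/
noncomputable def SI (d r₁ r₂ : ℝ) : ℝ :=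
  (volume (closedBall (0 : EuclideanSpace ℝ (Fin 2)) r₁ ∩
    closedBall (EuclideanSpace.single (0 : Fin 2) d) r₂)).toReal

open Set intervalIntegral

/-- Sixteen times the squared area of a triangle with sides `a`, `b`, `c` (Heron's formula). -/
def heron (a b c : ℝ) : ℝ := (a + b + c) * (a + b - c) * (a - b + c) * (b - a + c)

/-- By the law of cosines, the cosine of the angle between the sides `x` and `y` of a triangle
with sides `x`, `y`, `z`. -/
noncomputable def triangleCos (x y z : ℝ) : ℝ := (x ^ 2 + y ^ 2 - z ^ 2) / (2 * x * y)

section Triangle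

variable {a b c x y z : ℝ}

lemma heron_eq_poly (a b c : ℝ) :
    heron a b c = 2 * (a ^ 2 + b ^ 2) * c ^ 2 - c ^ 4 - (a ^ 2 - b ^ 2) ^ 2 := by
  unfold heron; ring

lemma heron_swap_left (a b c : ℝ) : heron a b c = heron b a c := by
  unfold heron; ring

lemma heron_swap_right (a b c : ℝ) : heron a b c = heron a c b := by
  unfold heron; ring

lemma pos_of_abs_sub_lt_add (h : |a - b| < a + b) : 0 < a ∧ 0 < b := by
  have := abs_lt.mp h
  exact ⟨by linarith, by linarith⟩

lemma heron_pos (h₁ : |a - b| < c) (h₂ : c < a + b) : 0 < heron a b c := by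
  obtain ⟨ha, hb⟩ := pos_of_abs_sub_lt_add (h₁.trans h₂)
  have hc : 0 < c := (abs_nonneg _).trans_lt h₁
  have := abs_lt.mp h₁
  unfold heron
  have : 0 < a - b + c := by linarith
  have : 0 < b - a + c := by linarith
  have : 0 < a + b - c := by linarith
  positivity

lemma one_sub_triangleCos_sq (hx : x ≠ 0) (hy : y ≠ 0) :
    1 - triangleCos x y z ^ 2 = heron x y z / (2 * x * y) ^ 2 := by
  unfold triangleCos heron
  field_simp
  ring

lemma sqrt_one_sub_triangleCos_sq (hx : 0 < x) (hy : 0 < y) :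
    √(1 - triangleCos x y z ^ 2) = √(heron x y z) / (2 * x * y) := by
  rw [one_sub_triangleCos_sq hx.ne' hy.ne', sqrt_div' _ (by positivity), sqrt_sq (by positivity)]

lemma triangleCos_mem_Ioo (hx : 0 < x) (hy : 0 < y) (hH : 0 < heron x y z) :
    triangleCos x y z ∈ Ioo (-1) 1 := by
  have : 0 < 1 - triangleCos x y z ^ 2 := by
    rw [one_sub_triangleCos_sq hx.ne' hy.ne']; positivity
  exact abs_lt.mp ((sq_lt_one_iff_abs_lt_one _).mp (by linarith))

lemma triangleCos_eq_one (hx : x ≠ 0) (hy : y ≠ 0) (h : z ^ 2 = (x - y) ^ 2) :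
    triangleCos x y z = 1 := by
  rw [triangleCos, h, div_eq_one_iff_eq (by positivity)]
  ring

lemma triangleCos_eq_neg_one (hx : x ≠ 0) (hy : y ≠ 0) (h : z ^ 2 = (x + y) ^ 2) :
    triangleCos x y z = -1 := by
  rw [triangleCos, h, div_eq_iff (by positivity)]
  ring

lemma triangleCos_self_right (x y : ℝ) : triangleCos x y x = y / (2 * x) := by
  unfold triangleCos
  rcases eq_or_ne y 0 with rfl | hy
  · simp
  · rw [show x ^ 2 + y ^ 2 - x ^ 2 = y * y by ring, mul_div_mul_right _ _ hy]

end Triangle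

/-- Length of the chord `{x} × ℝ` of the lens cut out by the disks of radii `r₁`, `r₂` centred at
`0` and `(d, 0)`; it is `0` where the line misses the lens because `√` is `0` on negatives. -/
noncomputable def lensChord (d r₁ r₂ x : ℝ) : ℝ :=
  2 * √(min (r₁ ^ 2 - x ^ 2) (r₂ ^ 2 - (d - x) ^ 2))

section Chord

variable {d r₁ r₂ : ℝ}

lemma closedBall_single_eq (c : ℝ) {r : ℝ} (hr : 0 ≤ r) :
    closedBall (EuclideanSpace.single (0 : Fin 2) c) r
      = {x : EuclideanSpace ℝ (Fin 2) | (x 0 - c) ^ 2 + x 1 ^ 2 ≤ r ^ 2} := by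
  ext x
  simp [EuclideanSpace.dist_eq, Fin.sum_univ_two, Real.sqrt_le_left hr, Real.dist_eq, sq_abs]

lemma volume_setOf_sq_le (c : ℝ) : volume {y : ℝ | y ^ 2 ≤ c} = ENNReal.ofReal (2 * √c) := by
  rcases le_or_gt 0 c with hc | hc
  · have : {y : ℝ | y ^ 2 ≤ c} = Icc (-√c) √c := by
      ext y
      simp only [mem_ofPred_eq, mem_Icc, ← abs_le, Real.le_sqrt (abs_nonneg y) hc, sq_abs]
    rw [this, Real.volume_Icc]
    ring_nf
  · have : {y : ℝ | y ^ 2 ≤ c} = ∅ :=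
      eq_empty_of_forall_notMem fun y hy => (hc.trans_le (sq_nonneg y)).not_ge hy
    simp [this, sqrt_eq_zero_of_nonpos hc.le]

lemma continuous_lensChord (d r₁ r₂ : ℝ) : Continuous (lensChord d r₁ r₂) := by
  unfold lensChord; fun_prop

lemma lensChord_eq_zero_of_abs_lt {x : ℝ} (hx : |r₁| < |x|) : lensChord d r₁ r₂ x = 0 := by
  have : r₁ ^ 2 < x ^ 2 := sq_lt_sq.mpr hx
  rw [lensChord, sqrt_eq_zero_of_nonpos ((min_le_left _ _).trans (by linarith)), mul_zero]

lemma lensChord_nonneg (d r₁ r₂ x : ℝ) : 0 ≤ lensChord d r₁ r₂ x := by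
  unfold lensChord; positivity

lemma integrable_lensChord (d r₁ r₂ : ℝ) : Integrable (lensChord d r₁ r₂) := by
  refine (continuous_lensChord d r₁ r₂).integrable_of_hasCompactSupport
    (HasCompactSupport.intro (isCompact_Icc (a := -|r₁|) (b := |r₁|)) fun x hx => ?_)
  exact lensChord_eq_zero_of_abs_lt (not_le.mp fun h => hx (abs_le.mp h))

lemma SI_eq_integral_lensChord (h₁ : 0 ≤ r₁) (h₂ : 0 ≤ r₂) :
    SI d r₁ r₂ = ∫ x, lensChord d r₁ r₂ x := by
  set A := {p : ℝ × ℝ | p.1 ^ 2 + p.2 ^ 2 ≤ r₁ ^ 2 ∧ (p.1 - d) ^ 2 + p.2 ^ 2 ≤ r₂ ^ 2}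
  have hA : MeasurableSet A := by
    simp only [A, ofPred_and]
    exact (measurableSet_le (by fun_prop) measurable_const).inter
      (measurableSet_le (by fun_prop) measurable_const)
  have hcoord : MeasurePreserving (fun x : EuclideanSpace ℝ (Fin 2) => (x 0, x 1)) :=
    (volume_preserving_finTwoArrow ℝ).comp
      (EuclideanSpace.volume_preserving_symm_measurableEquiv_toLp (Fin 2))
  have hpre : (fun x : EuclideanSpace ℝ (Fin 2) => (x 0, x 1)) ⁻¹' A
      = closedBall 0 r₁ ∩ closedBall (EuclideanSpace.single 0 d) r₂ := by
    have h0 : (0 : EuclideanSpace ℝ (Fin 2)) = EuclideanSpace.single 0 0 := by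
      ext i; simp [PiLp.single_apply]
    rw [h0, closedBall_single_eq 0 h₁, closedBall_single_eq d h₂]
    ext x; simp [A]
  have hslice (x : ℝ) :
      Prod.mk x ⁻¹' A = {y | y ^ 2 ≤ min (r₁ ^ 2 - x ^ 2) (r₂ ^ 2 - (d - x) ^ 2)} := by
    ext y
    simp only [A, mem_preimage, mem_ofPred_eq, le_min_iff]
    constructor <;> rintro ⟨h, h'⟩ <;> constructor <;> nlinarith
  rw [SI, ← hpre, hcoord.measure_preimage hA.nullMeasurableSet, Measure.volume_eq_prod,
    Measure.prod_apply hA]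
  simp_rw [hslice, volume_setOf_sq_le]
  change (∫⁻ x, ENNReal.ofReal (lensChord d r₁ r₂ x)).toReal = _
  rw [← ofReal_integral_eq_lintegral_ofReal (integrable_lensChord d r₁ r₂)
      (Filter.Eventually.of_forall (lensChord_nonneg d r₁ r₂)),
    ENNReal.toReal_ofReal (integral_nonneg (lensChord_nonneg d r₁ r₂))]

end Chord

/-- The lens cut out by overlapping disks of radii `r₁`, `r₂` at distance `d`: two circular sectors
of half-angles `arccos (triangleCos r₁ d r₂)` and `arccos (triangleCos r₂ d r₁)`, less the kite
spanned by the two centres and the two corners of the lens. -/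
noncomputable def lensArea (d r₁ r₂ : ℝ) : ℝ :=
  r₁ ^ 2 * arccos (triangleCos r₁ d r₂) + r₂ ^ 2 * arccos (triangleCos r₂ d r₁)
    - √(heron r₂ r₁ d) / 2

section Lens

variable {d r₁ r₂ r c x : ℝ}

lemma hasDerivAt_circularSegment (hr : 0 < r) (hx : x ∈ Ioo (-r) r) :
    HasDerivAt (fun y => y * √(r ^ 2 - y ^ 2) - r ^ 2 * arccos (y / r))
      (2 * √(r ^ 2 - x ^ 2)) x := by
  have hpos : 0 < r ^ 2 - x ^ 2 := by nlinarith [hx.1, hx.2]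
  have hxr : x / r ∈ Ioo (-1) 1 := by
    constructor
    · rw [lt_div_iff₀ hr]; linarith [hx.1]
    · rw [div_lt_one hr]; exact hx.2
  have hsqrt : HasDerivAt (fun y => √(r ^ 2 - y ^ 2)) (-(2 * x) / (2 * √(r ^ 2 - x ^ 2))) x := by
    simpa using ((hasDerivAt_pow 2 x).const_sub (r ^ 2)).sqrt hpos.ne'
  have harccos := (hasDerivAt_arccos hxr.1.ne' hxr.2.ne).comp x ((hasDerivAt_id x).div_const r)
  refine ((hasDerivAt_id x).mul hsqrt |>.sub (harccos.const_mul (r ^ 2))).congr_deriv ?_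
  have hs : √(1 - (x / r) ^ 2) = √(r ^ 2 - x ^ 2) / r := by
    rw [show 1 - (x / r) ^ 2 = (r ^ 2 - x ^ 2) / r ^ 2 by field_simp, sqrt_div' _ (by positivity),
      sqrt_sq hr.le]
  have hs2 := sq_sqrt hpos.le
  simp only [id, hs]
  field_simp
  linear_combination -hs2

lemma integral_two_mul_sqrt_sq_sub_sq (hr : 0 < r) (hc : c ∈ Icc (-1) 1) :
    ∫ x in r * c..r, 2 * √(r ^ 2 - x ^ 2) = r ^ 2 * (arccos c - c * √(1 - c ^ 2)) := by
  have hrc : r * c ≤ r := by nlinarith [hc.2]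
  have hrc' : -r ≤ r * c := by nlinarith [hc.1]
  rw [integral_eq_sub_of_hasDerivAt_of_le hrc (by fun_prop)
    (fun x hx => hasDerivAt_circularSegment hr ⟨hrc'.trans_lt hx.1, hx.2⟩)
    (Continuous.intervalIntegrable (by fun_prop) _ _)]
  rw [show r ^ 2 - (r * c) ^ 2 = r ^ 2 * (1 - c ^ 2) by ring,
    sqrt_mul' _ (by nlinarith [hc.1, hc.2]), sqrt_sq hr.le, mul_div_cancel_left₀ _ hr.ne',
    div_self hr.ne', sub_self, sqrt_zero, arccos_one]
  ring

lemma lensChord_of_le (hd : 0 < d) (hx : x ≤ (r₁ ^ 2 + d ^ 2 - r₂ ^ 2) / (2 * d)) :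
    lensChord d r₁ r₂ x = 2 * √(r₂ ^ 2 - (d - x) ^ 2) := by
  rw [le_div_iff₀ (by positivity)] at hx
  rw [lensChord, min_eq_right (by nlinarith)]

lemma lensChord_of_ge (hd : 0 < d) (hx : (r₁ ^ 2 + d ^ 2 - r₂ ^ 2) / (2 * d) ≤ x) :
    lensChord d r₁ r₂ x = 2 * √(r₁ ^ 2 - x ^ 2) := by
  rw [div_le_iff₀ (by positivity)] at hx
  rw [lensChord, min_eq_left (by nlinarith)]

lemma SI_eq_lensArea (h₁ : |r₁ - r₂| < d) (h₂ : d < r₁ + r₂) : SI d r₁ r₂ = lensArea d r₁ r₂ := by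
  obtain ⟨hr₁, hr₂⟩ := pos_of_abs_sub_lt_add (h₁.trans h₂)
  have hd : 0 < d := (abs_nonneg _).trans_lt h₁
  have hH : 0 < heron r₂ r₁ d := heron_pos (by rwa [abs_sub_comm]) (by linarith)
  set c₁ := triangleCos r₁ d r₂
  set c₂ := triangleCos r₂ d r₁
  have hc₁ : c₁ ∈ Ioo (-1) 1 :=
    triangleCos_mem_Ioo hr₁ hd (by rwa [heron_swap_right, heron_swap_left])
  have hc₂ : c₂ ∈ Ioo (-1) 1 := triangleCos_mem_Ioo hr₂ hd (by rwa [heron_swap_right])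
  set x₀ := (r₁ ^ 2 + d ^ 2 - r₂ ^ 2) / (2 * d)
  have hx₀ : x₀ = r₁ * c₁ := by simp only [x₀, c₁, triangleCos]; field_simp
  have hdx₀ : d - x₀ = r₂ * c₂ := by simp only [x₀, c₂, triangleCos]; field_simp; ring
  have hx₀r₁ : x₀ ≤ r₁ := by rw [hx₀]; nlinarith [hc₁.2]
  have hx₀r₂ : d - r₂ ≤ x₀ := by nlinarith [hc₂.2]
  have hvanish : ∀ x ∉ Ioc (d - r₂) r₁, lensChord d r₁ r₂ x = 0 := by
    intro x hx
    rcases not_and_or.mp hx with hx | hx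
    · rw [lensChord_of_le hd ((not_lt.mp hx).trans hx₀r₂),
        sqrt_eq_zero_of_nonpos (by nlinarith [not_lt.mp hx]), mul_zero]
    · exact lensChord_eq_zero_of_abs_lt
        ((abs_of_pos hr₁).trans_lt ((not_le.mp hx).trans_le (le_abs_self x)))
  have hint (a b : ℝ) : IntervalIntegrable (lensChord d r₁ r₂) volume a b :=
    (continuous_lensChord d r₁ r₂).intervalIntegrable a b
  have hleft : ∫ x in d - r₂..x₀, lensChord d r₁ r₂ x
      = ∫ x in r₂ * c₂..r₂, 2 * √(r₂ ^ 2 - x ^ 2) := by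
    rw [integral_congr fun x hx => lensChord_of_le hd (uIcc_of_le hx₀r₂ ▸ hx).2,
      integral_comp_sub_left (fun x => 2 * √(r₂ ^ 2 - x ^ 2)), sub_sub_cancel, hdx₀]
  have hright : ∫ x in x₀..r₁, lensChord d r₁ r₂ x
      = ∫ x in r₁ * c₁..r₁, 2 * √(r₁ ^ 2 - x ^ 2) := by
    rw [← hx₀]
    exact integral_congr fun x hx => lensChord_of_ge hd (uIcc_of_le hx₀r₁ ▸ hx).1
  rw [SI_eq_integral_lensChord hr₁.le hr₂.le,
    ← setIntegral_eq_integral_of_forall_compl_eq_zero hvanish,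
    ← integral_of_le (hx₀r₂.trans hx₀r₁), ← integral_add_adjacent_intervals (hint _ x₀) (hint x₀ _),
    hleft, hright, integral_two_mul_sqrt_sq_sub_sq hr₂ (Ioo_subset_Icc_self hc₂),
    integral_two_mul_sqrt_sq_sub_sq hr₁ (Ioo_subset_Icc_self hc₁),
    sqrt_one_sub_triangleCos_sq hr₂ hd, sqrt_one_sub_triangleCos_sq hr₁ hd, heron_swap_right,
    heron_swap_right r₁, heron_swap_left r₁]
  have hsum : r₁ * c₁ + r₂ * c₂ = d := by linarith
  unfold lensArea
  field_simp
  linear_combination (-(√(heron r₂ r₁ d))) * hsum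

end Lens

section Nested

variable {d r₁ r₂ : ℝ}

lemma SI_nonneg (d r₁ r₂ : ℝ) : 0 ≤ SI d r₁ r₂ := ENNReal.toReal_nonneg

lemma toReal_volume_closedBall_fin_two (x : EuclideanSpace ℝ (Fin 2)) {r : ℝ} (hr : 0 ≤ r) :
    (volume (closedBall x r)).toReal = π * r ^ 2 := by
  simp [ENNReal.toReal_ofReal hr, ENNReal.toReal_ofReal pi_nonneg, mul_comm]

lemma SI_eq_of_abs_le_abs_sub (h : |d| ≤ |r₁ - r₂|) (h₁ : 0 ≤ r₁) (h₂ : 0 ≤ r₂) :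
    SI d r₁ r₂ = π * min r₁ r₂ ^ 2 := by
  have hdist : dist (EuclideanSpace.single (0 : Fin 2) d) 0 = |d| := by
    simp [dist_eq_norm]
  rcases le_total r₁ r₂ with hr | hr
  · have hsub : closedBall (0 : EuclideanSpace ℝ (Fin 2)) r₁
        ⊆ closedBall (EuclideanSpace.single 0 d) r₂ := by
      refine closedBall_subset_closedBall' ?_
      rw [dist_comm, hdist]
      rw [abs_of_nonpos (sub_nonpos.mpr hr)] at h
      linarith
    rw [SI, inter_eq_left.mpr hsub, toReal_volume_closedBall_fin_two _ h₁, min_eq_left hr]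
  · have hsub : closedBall (EuclideanSpace.single (0 : Fin 2) d) r₂
        ⊆ closedBall 0 r₁ := by
      refine closedBall_subset_closedBall' ?_
      rw [hdist]
      rw [abs_of_nonneg (sub_nonneg.mpr hr)] at h
      linarith
    rw [SI, inter_eq_right.mpr hsub, toReal_volume_closedBall_fin_two _ h₂, min_eq_right hr]

end Nested

/-- The closed form of `I(ρ)` in the paper, with `R = R_p`, `r = r_I`. -/
noncomputable def radialPrimitive (R r ρ : ℝ) : ℝ :=
  (1 / 2) * π * r ^ 2 + ρ ^ 2 * arccos (triangleCos R ρ r)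
    + (r ^ 2 * ρ ^ 2 / R ^ 2) * arccos (triangleCos r ρ R)
    - r ^ 2 * arcsin (triangleCos r R ρ)
    - ((ρ ^ 2 + r ^ 2 + R ^ 2) / (4 * R ^ 2)) * √(heron r R ρ)

section Derivatives

variable {a b u : ℝ}

lemma hasDerivAt_arccos_triangleCos (h₁ : |a - b| < u) (h₂ : u < a + b) :
    HasDerivAt (fun v => arccos (triangleCos a v b))
      (-(u ^ 2 - a ^ 2 + b ^ 2) / (u * √(heron a b u))) u := by
  obtain ⟨ha, -⟩ := pos_of_abs_sub_lt_add (h₁.trans h₂)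
  have hu : 0 < u := (abs_nonneg _).trans_lt h₁
  have hH := heron_pos h₁ h₂
  have hc : triangleCos a u b ∈ Ioo (-1) 1 :=
    triangleCos_mem_Ioo ha hu (by rwa [heron_swap_right])
  have hcos : HasDerivAt (fun v => triangleCos a v b)
      ((2 * u * (2 * a * u) - (a ^ 2 + u ^ 2 - b ^ 2) * (2 * a)) / (2 * a * u) ^ 2) u := by
    unfold triangleCos
    have hden : 2 * a * u ≠ 0 := by positivity
    refine ((((hasDerivAt_pow 2 u).const_add (a ^ 2)).sub_const (b ^ 2)).div
      ((hasDerivAt_id u).const_mul (2 * a)) hden).congr_deriv ?_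
    simp
  refine ((hasDerivAt_arccos hc.1.ne' hc.2.ne).comp u hcos).congr_deriv ?_
  rw [sqrt_one_sub_triangleCos_sq ha hu, ← heron_swap_right]
  have := sqrt_pos.mpr hH
  field_simp
  ring

lemma hasDerivAt_arcsin_triangleCos (h₁ : |a - b| < u) (h₂ : u < a + b) :
    HasDerivAt (fun v => arcsin (triangleCos a b v)) (-(2 * u) / √(heron a b u)) u := by
  obtain ⟨ha, hb⟩ := pos_of_abs_sub_lt_add (h₁.trans h₂)
  have hH := heron_pos h₁ h₂
  have hc : triangleCos a b u ∈ Ioo (-1) 1 := triangleCos_mem_Ioo ha hb hH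
  have hcos : HasDerivAt (fun v => triangleCos a b v) (-(2 * u) / (2 * a * b)) u := by
    unfold triangleCos
    simpa using ((hasDerivAt_pow 2 u).const_sub (a ^ 2 + b ^ 2)).div_const (2 * a * b)
  refine ((hasDerivAt_arcsin hc.1.ne' hc.2.ne).comp u hcos).congr_deriv ?_
  rw [sqrt_one_sub_triangleCos_sq ha hb]
  have := sqrt_pos.mpr hH
  field_simp

lemma hasDerivAt_sqrt_heron (h₁ : |a - b| < u) (h₂ : u < a + b) :
    HasDerivAt (fun v => √(heron a b v)) (2 * u * (a ^ 2 + b ^ 2 - u ^ 2) / √(heron a b u)) u := by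
  have hH := heron_pos h₁ h₂
  have hpoly : HasDerivAt (heron a b) (4 * u * (a ^ 2 + b ^ 2 - u ^ 2)) u := by
    rw [show heron a b = fun v => 2 * (a ^ 2 + b ^ 2) * v ^ 2 - v ^ 4 - (a ^ 2 - b ^ 2) ^ 2 from
      funext (heron_eq_poly a b)]
    refine ((((hasDerivAt_pow 2 u).const_mul (2 * (a ^ 2 + b ^ 2))).sub
      (hasDerivAt_pow 4 u)).sub_const ((a ^ 2 - b ^ 2) ^ 2)).congr_deriv ?_
    push_cast
    ring
  refine (hpoly.sqrt hH.ne').congr_deriv ?_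
  have := sqrt_pos.mpr hH
  field_simp
  ring

end Derivatives

section RadialPrimitive

variable {R r t a b : ℝ}

lemma hasDerivAt_radialPrimitive (h₁ : |R - r| < t) (h₂ : t < R + r) :
    HasDerivAt (radialPrimitive R r) (2 / R ^ 2 * (t * lensArea t R r)) t := by
  have h₁' : |r - R| < t := by rwa [abs_sub_comm]
  have h₂' : t < r + R := by linarith
  obtain ⟨hR, hr⟩ := pos_of_abs_sub_lt_add (h₁.trans h₂)
  have ht : 0 < t := (abs_nonneg _).trans_lt h₁
  have hH := heron_pos h₁' h₂'
  have hs := sq_sqrt hH.le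
  have := sqrt_pos.mpr hH
  have hsq := hasDerivAt_pow 2 t
  have hA := hsq.mul (hasDerivAt_arccos_triangleCos h₁ h₂)
  have hB := ((hsq.const_mul (r ^ 2)).div_const (R ^ 2)).mul (hasDerivAt_arccos_triangleCos h₁' h₂')
  have hC := (hasDerivAt_arcsin_triangleCos h₁' h₂').const_mul (r ^ 2)
  have hD := (((hsq.add_const (r ^ 2)).add_const (R ^ 2)).div_const (4 * R ^ 2)).mul
    (hasDerivAt_sqrt_heron h₁' h₂')
  refine ((((hA.const_add ((1 / 2) * π * r ^ 2)).add hB).sub hC).sub hD).congr_deriv ?_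
  rw [heron_swap_left R]
  unfold lensArea
  push_cast
  field_simp
  linear_combination 2 * hs + 2 * heron_eq_poly r R t

lemma continuousOn_arccos_triangleCos (ha : a ≠ 0) :
    ContinuousOn (fun v => arccos (triangleCos a v b)) (Ici |a - b|) := by
  rcases eq_or_ne a b with rfl | hab
  · simp_rw [triangleCos_self_right]
    exact (by fun_prop : Continuous fun v => arccos (v / (2 * a))).continuousOn
  · refine continuous_arccos.comp_continuousOn
      (ContinuousOn.div (by fun_prop) (by fun_prop) fun v hv => ?_)
    have hv : 0 < v := (abs_pos.mpr (sub_ne_zero.mpr hab)).trans_le hv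
    exact mul_ne_zero (mul_ne_zero two_ne_zero ha) hv.ne'

lemma continuousOn_radialPrimitive (hR : R ≠ 0) (hr : r ≠ 0) :
    ContinuousOn (radialPrimitive R r) (Ici |R - r|) := by
  have h₁ := continuousOn_arccos_triangleCos (b := r) hR
  have h₂ := continuousOn_arccos_triangleCos (b := R) hr
  rw [abs_sub_comm] at h₂
  have h₃ : ContinuousOn (fun v => arcsin (triangleCos r R v)) (Ici |R - r|) :=
    (continuous_arcsin.comp (by unfold triangleCos; fun_prop)).continuousOn
  unfold radialPrimitive heron
  fun_prop (disch := intros; positivity)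

lemma radialPrimitive_abs_sub (hR : 0 < R) (hr : 0 < r) :
    radialPrimitive R r |R - r| = π * min R r ^ 2 * (R - r) ^ 2 / R ^ 2 := by
  have habs := sq_abs (R - r)
  have hsin : arcsin (triangleCos r R |R - r|) = π / 2 := by
    rw [triangleCos_eq_one hr.ne' hR.ne' (by rw [habs]; ring), arcsin_one]
  have hheron : heron r R |R - r| = 0 := by
    rw [heron_eq_poly]
    linear_combination (2 * (r ^ 2 + R ^ 2) - |R - r| ^ 2 - (R - r) ^ 2) * habs
  rw [radialPrimitive, hsin, hheron, sqrt_zero, habs]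
  rcases lt_trichotomy r R with h | rfl | h
  · have hRr := (sub_pos.mpr h).ne'
    rw [abs_of_pos (sub_pos.mpr h), min_eq_right h.le,
      triangleCos_eq_one hR.ne' hRr (by ring), triangleCos_eq_neg_one hr.ne' hRr (by ring),
      arccos_one, arccos_neg_one]
    field_simp
    ring
  · simp
    ring
  · have hrR := (sub_pos.mpr h).ne'
    rw [abs_sub_comm, abs_of_pos (sub_pos.mpr h), min_eq_left h.le,
      triangleCos_eq_neg_one hR.ne' hrR (by ring), triangleCos_eq_one hr.ne' hrR (by ring),
      arccos_one, arccos_neg_one]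
    field_simp
    ring

end RadialPrimitive

lemma intervalIntegrable_and_integral_eq_sub_of_hasDerivAt_of_nonneg {f f' : ℝ → ℝ} {a b : ℝ}
    (hab : a ≤ b) (hcont : ContinuousOn f (Icc a b))
    (hderiv : ∀ x ∈ Ioo a b, HasDerivAt f (f' x) x) (hpos : ∀ x ∈ Ioo a b, 0 ≤ f' x) :
    IntervalIntegrable f' volume a b ∧ ∫ x in a..b, f' x = f b - f a := by
  have hint : IntervalIntegrable f' volume a b :=
    (intervalIntegrable_iff_integrableOn_Ioc_of_le hab).mpr
      (integrableOn_deriv_of_nonneg hcont hderiv hpos)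
  exact ⟨hint, integral_eq_sub_of_hasDerivAt_of_le hab hcont hderiv hint⟩

section RadialIntegral

variable {R r ρ : ℝ}

lemma radialIntegral_nested (hR : 0 ≤ R) (hr : 0 ≤ r) :
    IntervalIntegrable (fun t => t * SI t R r / (π * R ^ 2)) volume 0 |R - r| ∧
      ∫ t in (0 : ℝ)..|R - r|, t * SI t R r / (π * R ^ 2)
        = min R r ^ 2 * |R - r| ^ 2 / (2 * R ^ 2) := by
  have hderiv : ∀ t ∈ Ioo 0 |R - r|, HasDerivAt (fun t => min R r ^ 2 * t ^ 2 / (2 * R ^ 2))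
      (t * SI t R r / (π * R ^ 2)) t := by
    intro t ht
    rw [SI_eq_of_abs_le_abs_sub (by rw [abs_of_pos ht.1]; exact ht.2.le) hR hr]
    refine ((hasDerivAt_pow 2 t).const_mul _ |>.div_const _).congr_deriv ?_
    field_simp [pi_ne_zero]
    push_cast
    ring
  obtain ⟨hint, hval⟩ := intervalIntegrable_and_integral_eq_sub_of_hasDerivAt_of_nonneg
    (abs_nonneg _) (by fun_prop) hderiv
    (fun t ht => by have := SI_nonneg t R r; have := ht.1; positivity)
  exact ⟨hint, by rw [hval]; ring⟩

lemma radialIntegral_lens (h₀ : |R - r| ≤ ρ) (h₁ : ρ < R + r) :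
    IntervalIntegrable (fun t => t * SI t R r / (π * R ^ 2)) volume |R - r| ρ ∧
      ∫ t in |R - r|..ρ, t * SI t R r / (π * R ^ 2)
        = radialPrimitive R r ρ / (2 * π) - radialPrimitive R r |R - r| / (2 * π) := by
  obtain ⟨hR, hr⟩ := pos_of_abs_sub_lt_add (h₀.trans_lt h₁)
  refine intervalIntegrable_and_integral_eq_sub_of_hasDerivAt_of_nonneg h₀
    (((continuousOn_radialPrimitive hR.ne' hr.ne').mono Icc_subset_Ici_self).div_const _)
    (fun t ht => ?_) fun t ht => by
      have := SI_nonneg t R r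
      have := (abs_nonneg _).trans_lt ht.1
      positivity
  rw [SI_eq_lensArea ht.1 (ht.2.trans h₁)]
  refine ((hasDerivAt_radialPrimitive ht.1 (ht.2.trans h₁)).div_const (2 * π)).congr_deriv ?_
  field_simp

end RadialIntegral

/-- Explicit form of the radial integral `I(ρ) = 2π ∫₀^ρ t · S_I(t, R_p, r_I)/(π R_p²) dt`
for `|R_p − r_I| < ρ < R_p + r_I`. -/
theorem radial_integral_middle (r_I R_p : ℝ) (hrI : 0 < r_I) (hRp : 0 < R_p)
    (ρ : ℝ) (h0 : |R_p - r_I| < ρ) (h1 : ρ < R_p + r_I) :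
    2 * π * ∫ t in (0:ℝ)..ρ, t * SI t R_p r_I / (π * R_p ^ 2)
      = (1 / 2) * π * r_I ^ 2
        + ρ ^ 2 * arccos ((R_p ^ 2 + ρ ^ 2 - r_I ^ 2) / (2 * R_p * ρ))
        + (r_I ^ 2 * ρ ^ 2 / R_p ^ 2) * arccos ((r_I ^ 2 + ρ ^ 2 - R_p ^ 2) / (2 * r_I * ρ))
        - r_I ^ 2 * arcsin ((r_I ^ 2 + R_p ^ 2 - ρ ^ 2) / (2 * r_I * R_p))
        - ((ρ ^ 2 + r_I ^ 2 + R_p ^ 2) / (4 * R_p ^ 2)) *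
            Real.sqrt ((r_I + R_p + ρ) * (r_I + R_p - ρ) * (r_I - R_p + ρ) * (R_p - r_I + ρ)) := by
  obtain ⟨hint₁, hval₁⟩ := radialIntegral_nested hRp.le hrI.le
  obtain ⟨hint₂, hval₂⟩ := radialIntegral_lens h0.le h1
  rw [← integral_add_adjacent_intervals hint₁ hint₂, hval₁, hval₂,
    radialPrimitive_abs_sub hRp hrI, sq_abs]
  change _ = radialPrimitive R_p r_I ρ
  field_simp
  ring
end

section
/- Let r_I, R_p > 0 and define I(ρ) = 2π ∫₀^ρ t · S_I(t, R_p, r_I)/(π R_p²) dt. Then for every ρ ≥ R_p + r_I, one has I(ρ) = π r_I². -/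
open MeasureTheory Metric Real

/-!
Averaging the lens area over all positions `x` of the second centre gives, by Tonelli,
`∫ vol(B(0, R_p) ∩ B(x, r_I)) dx = vol B(0, R_p) · vol B(0, r_I) = π R_p² · π r_I²`.
The lens area depends only on `‖x‖`, so in polar coordinates the left side is
`2π ∫₀^∞ t S_I(t, R_p, r_I) dt`, and the integrand vanishes beyond `R_p + r_I`.
-/

section Tonelli

variable {E : Type*} [NormedAddCommGroup E] [SecondCountableTopology E]
  [MeasurableSpace E] [BorelSpace E] (μ : Measure E) [SFinite μ]
  {A : Set E} (hA : MeasurableSet A) (r : ℝ)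

include hA in
theorem measurableSet_setOf_mem_inter_closedBall :
    MeasurableSet {p : E × E | p.2 ∈ A ∧ dist p.2 p.1 ≤ r} :=
  (measurable_snd hA).inter (measurableSet_le (measurable_snd.dist measurable_fst) measurable_const)

include hA in
theorem measurable_measure_inter_closedBall : Measurable fun x => μ (A ∩ closedBall x r) :=
  measurable_measure_prodMk_left (measurableSet_setOf_mem_inter_closedBall hA r)

include hA in
theorem lintegral_measure_inter_closedBall [μ.IsAddHaarMeasure] :
    ∫⁻ x, μ (A ∩ closedBall x r) ∂μ = μ A * μ (closedBall 0 r) := by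
  have hS := measurableSet_setOf_mem_inter_closedBall hA r
  calc ∫⁻ x, μ (A ∩ closedBall x r) ∂μ = μ.prod μ {p : E × E | p.2 ∈ A ∧ dist p.2 p.1 ≤ r} :=
        (Measure.prod_apply hS).symm
    _ = ∫⁻ y, A.indicator (fun _ => μ (closedBall 0 r)) y ∂μ := by
        rw [Measure.prod_apply_symm hS]
        refine lintegral_congr fun y => ?_
        by_cases hy : y ∈ A
        · have : (fun x => (x, y)) ⁻¹' {p : E × E | p.2 ∈ A ∧ dist p.2 p.1 ≤ r} =
              closedBall y r := by ext x; simp [hy, dist_comm]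
          rw [this, Set.indicator_of_mem hy, Measure.addHaar_closedBall_center]
        · have : (fun x => (x, y)) ⁻¹' {p : E × E | p.2 ∈ A ∧ dist p.2 p.1 ≤ r} = ∅ := by
            ext x; simp [hy]
          rw [this, Set.indicator_of_notMem hy, measure_empty]
    _ = μ A * μ (closedBall 0 r) := by rw [lintegral_indicator_const hA, mul_comm]

end Tonelli

section Rotation

variable {E : Type*} [NormedAddCommGroup E] [InnerProductSpace ℝ E] [FiniteDimensional ℝ E]
  [MeasurableSpace E] [BorelSpace E]

theorem volume_closedBall_inter_closedBall_of_norm_eq {x y : E} (hxy : ‖x‖ = ‖y‖) (r₁ r₂ : ℝ) :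
    volume (closedBall (0 : E) r₁ ∩ closedBall x r₂) =
      volume (closedBall (0 : E) r₁ ∩ closedBall y r₂) := by
  set T := (ℝ ∙ (x - y))ᗮ.reflection
  have hTx : T.symm y = x := T.symm_apply_eq.mpr (Submodule.reflection_sub hxy).symm
  have hpre : T ⁻¹' (closedBall 0 r₁ ∩ closedBall y r₂) = closedBall 0 r₁ ∩ closedBall x r₂ := by
    rw [Set.preimage_inter, T.preimage_closedBall, T.preimage_closedBall, map_zero, hTx]
  rw [← hpre, T.measurePreserving.measure_preimage
    (measurableSet_closedBall.inter measurableSet_closedBall).nullMeasurableSet]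

end Rotation

theorem SI_norm_eq (x : EuclideanSpace ℝ (Fin 2)) (r₁ r₂ : ℝ) :
    SI ‖x‖ r₁ r₂ =
      (volume (closedBall (0 : EuclideanSpace ℝ (Fin 2)) r₁ ∩ closedBall x r₂)).toReal := by
  rw [SI, volume_closedBall_inter_closedBall_of_norm_eq]
  rw [PiLp.norm_single, norm_norm]

theorem integral_SI_norm {r₁ r₂ : ℝ} (h₁ : 0 ≤ r₁) (h₂ : 0 ≤ r₂) :
    ∫ x : EuclideanSpace ℝ (Fin 2), SI ‖x‖ r₁ r₂ = π * r₁ ^ 2 * (π * r₂ ^ 2) := by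
  have hA : MeasurableSet (closedBall (0 : EuclideanSpace ℝ (Fin 2)) r₁) := measurableSet_closedBall
  have hfin : ∀ x : EuclideanSpace ℝ (Fin 2), volume (closedBall 0 r₁ ∩ closedBall x r₂) < ⊤ :=
    fun x =>
      (measure_mono Set.inter_subset_right).trans_lt measure_closedBall_lt_top
  simp_rw [SI_norm_eq]
  rw [integral_toReal (measurable_measure_inter_closedBall volume hA r₂).aemeasurable
      (ae_of_all _ hfin), lintegral_measure_inter_closedBall volume hA,
    EuclideanSpace.volume_closedBall_fin_two, EuclideanSpace.volume_closedBall_fin_two]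
  simp only [ENNReal.toReal_mul, ENNReal.toReal_pow, ENNReal.toReal_ofReal h₁,
    ENNReal.toReal_ofReal h₂, ENNReal.toReal_ofReal pi_nonneg]
  ring

theorem integral_fun_norm_euclideanSpace_fin_two (f : ℝ → ℝ) :
    ∫ x : EuclideanSpace ℝ (Fin 2), f ‖x‖ = 2 * π * ∫ t in Set.Ioi 0, t * f t := by
  rw [integral_fun_norm_addHaar]
  simp [measureReal_def, ENNReal.toReal_ofReal pi_nonneg]
  ring

theorem SI_eq_zero_of_add_lt {d r₁ r₂ : ℝ} (hd : r₁ + r₂ < d) : SI d r₁ r₂ = 0 := by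
  have hdisj : Disjoint (closedBall (0 : EuclideanSpace ℝ (Fin 2)) r₁)
      (closedBall (EuclideanSpace.single 0 d) r₂) := by
    refine closedBall_disjoint_closedBall (hd.trans_le ?_)
    rw [dist_comm, dist_zero_right, PiLp.norm_single]
    exact le_abs_self d
  rw [SI, hdisj.inter_eq, measure_empty, ENNReal.toReal_zero]

theorem integral_Ioi_zero_eq_intervalIntegral_of_eq_zero {f : ℝ → ℝ} {ρ : ℝ} (hρ : 0 ≤ ρ)
    (hf : ∀ t, ρ < t → f t = 0) : ∫ t in Set.Ioi 0, f t = ∫ t in (0 : ℝ)..ρ, f t := by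
  rw [intervalIntegral.integral_of_le hρ]
  exact setIntegral_eq_of_subset_of_forall_sdiff_eq_zero measurableSet_Ioi Set.Ioc_subset_Ioi_self
    fun t ht => hf t (not_le.mp fun h => ht.2 ⟨ht.1, h⟩)

/-- For `ρ ≥ R_p + r_I`, the radial integral
`I(ρ) = 2π ∫₀^ρ t · S_I(t, R_p, r_I)/(π R_p²) dt` equals `π r_I²`. -/
theorem radial_integral_large (r_I R_p : ℝ) (hrI : 0 < r_I) (hRp : 0 < R_p)
    (ρ : ℝ) (h : R_p + r_I ≤ ρ) :
    2 * π * ∫ t in (0:ℝ)..ρ, t * SI t R_p r_I / (π * R_p ^ 2) = π * r_I ^ 2 := by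
  have hplane := integral_SI_norm hRp.le hrI.le
  rw [integral_fun_norm_euclideanSpace_fin_two fun t => SI t R_p r_I,
    integral_Ioi_zero_eq_intervalIntegral_of_eq_zero (by linarith : (0 : ℝ) ≤ ρ) fun t ht => by
      rw [SI_eq_zero_of_add_lt (h.trans_lt ht), mul_zero]] at hplane
  rw [intervalIntegral.integral_div, mul_div_assoc', hplane]
  field_simp
end

section
/- Fix d ≥ 0, R_p, R_I > 0, μ > 0, and points a, b ∈ ℝ² with dist(a, b) = d. For r_I > 0 define F(r_I) = exp(−μ(Q(r_I) + π R_I²)), where Q(r_I) = ∫_{D(a, r_I + R_p) \ D(b, R_I)} S_I(‖x − a‖, R_p, r_I)/(π R_p²) dx. Then F is nonincreasing on (0, ∞); moreover, for all 0 < r_I < r_I′ with d + r_I′ + R_p > R_I, one has F(r_I′) < F(r_I). (This is the paper's Theorem T1.1: the closed-form probability of opportunity Pr[H₀] is a strictly decreasing function of the secondary transmission power p_tx ∝ r_I^α.) -/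
/-!
Since `μ > 0` and `exp` is increasing, everything reduces to the monotonicity of `Q`. After
a rigid motion, `S_I(‖x - a‖, R_p, r)` is the area of the lens `D(a, R_p) ∩ D(x, r)`, so
`Q(r)` is the integral, over `D(a, r + R_p) \ D(b, R_I)`, of a nonnegative integrand that
grows with `r` over a domain that grows with `r`. For strictness, the open shell
`r + R_p < ‖x - a‖ < r' + R_p` outside `D(b, R_I)` is nonempty as soon as
`d + r' + R_p > R_I` (take `x` on the ray from `b` through `a`); on it the lens of radius `r`
is empty while that of radius `r'` has positive area.
-/

open MeasureTheory Metric Real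

/-- The double integral `Q` appearing in the closed-form probability of opportunity. -/
noncomputable def Qfun (a b : EuclideanSpace ℝ (Fin 2)) (R_p R_I r_I : ℝ) : ℝ :=
  ∫ x in closedBall a (r_I + R_p) \ closedBall b R_I, SI ‖x - a‖ R_p r_I / (π * R_p ^ 2)


theorem setIntegral_lt_setIntegral_of_le_of_lt_on {X : Type*} [MeasurableSpace X]
    {μ : Measure X} {f g : X → ℝ} {s U : Set X} (hs : MeasurableSet s)
    (hf : IntegrableOn f s μ) (hg : IntegrableOn g s μ) (hle : ∀ x ∈ s, f x ≤ g x)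
    (hUs : U ⊆ s) (hU : 0 < μ U) (hlt : ∀ x ∈ U, f x < g x) :
    ∫ x in s, f x ∂μ < ∫ x in s, g x ∂μ := by
  have hpos : 0 < ∫ x in s, (g x - f x) ∂μ := by
    rw [setIntegral_pos_iff_support_of_nonneg_ae
      (ae_restrict_of_forall_mem hs fun x hx => sub_nonneg.2 (hle x hx)) (hg.sub hf)]
    exact hU.trans_le (measure_mono fun x hx => ⟨sub_ne_zero.2 (hlt x hx).ne', hUs hx⟩)
  rw [integral_sub hg hf] at hpos
  linarith

section MetricMeasure

variable {X : Type*} [PseudoMetricSpace X] [MeasurableSpace X] (μ : Measure X)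

theorem measurable_measure_closedBall_inter_closedBall [OpensMeasurableSpace X]
    [SecondCountableTopology X] [SFinite μ] (a : X) (R r : ℝ) :
    Measurable fun x => μ (closedBall a R ∩ closedBall x r) := by
  have hs : MeasurableSet {p : X × X | dist p.2 a ≤ R ∧ dist p.2 p.1 ≤ r} :=
    (measurableSet_le (measurable_snd.dist measurable_const) measurable_const).inter
      (measurableSet_le (measurable_snd.dist measurable_fst) measurable_const)
  exact measurable_measure_prodMk_left hs

theorem integrableOn_measureReal_closedBall_inter_closedBall [OpensMeasurableSpace X]
    [SecondCountableTopology X] [ProperSpace X] [SFinite μ] [IsFiniteMeasureOnCompacts μ]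
    (a : X) (R r : ℝ) {s : Set X} (hs : μ s ≠ ⊤) :
    IntegrableOn (fun x => μ.real (closedBall a R ∩ closedBall x r)) s μ := by
  refine Measure.integrableOn_of_bounded hs
    (measurable_measure_closedBall_inter_closedBall μ a R r).ennreal_toReal.aestronglyMeasurable
    (M := μ.real (closedBall a R)) (ae_of_all _ fun x => ?_)
  rw [Real.norm_of_nonneg measureReal_nonneg]
  exact measureReal_mono Set.inter_subset_left measure_closedBall_lt_top.ne

theorem measureReal_closedBall_inter_closedBall_mono [ProperSpace X]
    [IsFiniteMeasureOnCompacts μ] (a x : X) (R : ℝ) :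
    Monotone fun r => μ.real (closedBall a R ∩ closedBall x r) :=
  fun _ _ hrr =>
    measureReal_mono (Set.inter_subset_inter_right _ (closedBall_subset_closedBall hrr))
    (measure_ne_top_of_subset Set.inter_subset_left measure_closedBall_lt_top.ne)

end MetricMeasure

theorem measure_closedBall_inter_closedBall_pos {E : Type*} [NormedAddCommGroup E]
    [NormedSpace ℝ E] [MeasurableSpace E] (μ : Measure E) [μ.IsOpenPosMeasure] {x y : E}
    {R r : ℝ} (hR : 0 < R) (hr : 0 < r) (h : dist x y < R + r) :
    0 < μ (closedBall x R ∩ closedBall y r) := by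
  have hne : (ball x R ∩ ball y r).Nonempty := by
    rw [← Set.not_disjoint_iff_nonempty_inter, disjoint_ball_ball_iff hR hr, not_le]
    exact h
  exact ((isOpen_ball.inter isOpen_ball).measure_pos μ hne).trans_le
    (measure_mono (Set.inter_subset_inter ball_subset_closedBall ball_subset_closedBall))

theorem exists_dist_eq_and_dist_eq_dist_add {E : Type*} [NormedAddCommGroup E]
    [NormedSpace ℝ E] [Nontrivial E] (a b : E) {t : ℝ} (ht : 0 ≤ t) :
    ∃ x, dist x a = t ∧ dist x b = dist a b + t := by
  rcases eq_or_ne a b with rfl | hab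
  · obtain ⟨v, hv⟩ := exists_norm_eq E ht
    exact ⟨a + v, by simp [hv], by simp [hv]⟩
  · have hd : 0 < dist b a := dist_pos.2 hab.symm
    refine ⟨AffineMap.lineMap b a (1 + t / dist b a), ?_, ?_⟩
    · rw [dist_lineMap_right, sub_add_cancel_left, norm_neg, Real.norm_of_nonneg (by positivity),
        div_mul_cancel₀ _ hd.ne']
    · rw [dist_lineMap_left, Real.norm_of_nonneg (by positivity), add_mul, one_mul,
        div_mul_cancel₀ _ hd.ne', dist_comm]

theorem volume_closedBall_inter_closedBall_eq_of_dist_eq {E : Type*} [NormedAddCommGroup E]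
    [InnerProductSpace ℝ E] [FiniteDimensional ℝ E] [MeasurableSpace E] [BorelSpace E]
    {x y x' y' : E} (h : dist x y = dist x' y') (R r : ℝ) :
    volume (closedBall x R ∩ closedBall y r) = volume (closedBall x' R ∩ closedBall y' r) := by
  set ρ := Submodule.reflection (ℝ ∙ ((y - x) - (y' - x')))ᗮ
  have hρ : ρ (y - x) = y' - x' :=
    Submodule.reflection_sub (by rw [← dist_eq_norm, ← dist_eq_norm, dist_comm, h, dist_comm])
  set g : E ≃ᵢ E :=
    ((IsometryEquiv.subRight x).trans ρ.toIsometryEquiv).trans (IsometryEquiv.addRight x')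
  have hg : MeasurePreserving g :=
    (measurePreserving_add_right volume x').comp
      (ρ.measurePreserving.comp (measurePreserving_sub_right volume x))
  have hgx : g x = x' := by simp [g]
  have hgy : g y = y' := by simp [g, hρ]
  have hpre :
      g ⁻¹' (closedBall x' R ∩ closedBall y' r) = closedBall x R ∩ closedBall y r := by
    rw [Set.preimage_inter, ← hgx, ← hgy, g.isometry.preimage_closedBall,
      g.isometry.preimage_closedBall]
  rw [← hpre,
    hg.measure_preimage (measurableSet_closedBall.inter measurableSet_closedBall).nullMeasurableSet]

theorem SI_norm_sub (a x : EuclideanSpace ℝ (Fin 2)) (R r : ℝ) :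
    SI ‖x - a‖ R r = volume.real (closedBall a R ∩ closedBall x r) := by
  rw [SI, measureReal_def, volume_closedBall_inter_closedBall_eq_of_dist_eq]
  simp [dist_eq_norm, norm_sub_rev]

noncomputable def lensRatio (a : EuclideanSpace ℝ (Fin 2)) (R_p r : ℝ)
    (x : EuclideanSpace ℝ (Fin 2)) : ℝ :=
  volume.real (closedBall a R_p ∩ closedBall x r) / (π * R_p ^ 2)

section lensRatio

variable (a : EuclideanSpace ℝ (Fin 2)) (R_p : ℝ)

theorem Qfun_eq_setIntegral_lensRatio (b : EuclideanSpace ℝ (Fin 2)) (R_I r : ℝ) :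
    Qfun a b R_p R_I r =
      ∫ x in closedBall a (r + R_p) \ closedBall b R_I, lensRatio a R_p r x := by
  simp only [Qfun, lensRatio, SI_norm_sub]

theorem lensRatio_nonneg (r : ℝ) (x : EuclideanSpace ℝ (Fin 2)) : 0 ≤ lensRatio a R_p r x :=
  div_nonneg measureReal_nonneg (by positivity)

theorem lensRatio_mono (x : EuclideanSpace ℝ (Fin 2)) : Monotone fun r => lensRatio a R_p r x :=
  fun _ _ hrr => div_le_div_of_nonneg_right (measureReal_closedBall_inter_closedBall_mono
    volume a x R_p hrr) (by positivity)

theorem integrableOn_lensRatio (r : ℝ) {s : Set (EuclideanSpace ℝ (Fin 2))}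
    (hs : volume s ≠ ⊤) :
    IntegrableOn (lensRatio a R_p r) s :=
  (integrableOn_measureReal_closedBall_inter_closedBall volume a R_p r hs).div_const _

theorem lensRatio_eq_zero {r : ℝ} {x : EuclideanSpace ℝ (Fin 2)} (h : R_p + r < dist a x) :
    lensRatio a R_p r x = 0 := by
  rw [lensRatio, (closedBall_disjoint_closedBall h).inter_eq, measureReal_empty, zero_div]

theorem lensRatio_pos (hRp : 0 < R_p) {r : ℝ} (hr : 0 < r) {x : EuclideanSpace ℝ (Fin 2)}
    (h : dist a x < R_p + r) : 0 < lensRatio a R_p r x :=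
  div_pos (ENNReal.toReal_pos (measure_closedBall_inter_closedBall_pos volume hRp hr h).ne'
    (measure_ne_top_of_subset Set.inter_subset_left measure_closedBall_lt_top.ne))
    (by positivity)

end lensRatio

section Qfun

variable (a b : EuclideanSpace ℝ (Fin 2)) (R_p R_I : ℝ)

theorem Qfun_le_setIntegral_lensRatio {r r' : ℝ} (hrr : r ≤ r') :
    Qfun a b R_p R_I r ≤
      ∫ x in closedBall a (r' + R_p) \ closedBall b R_I, lensRatio a R_p r x := by
  rw [Qfun_eq_setIntegral_lensRatio]
  refine setIntegral_mono_set (integrableOn_lensRatio a R_p r ?_)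
    (ae_of_all _ (lensRatio_nonneg a R_p r)) (Set.sdiff_subset_sdiff_left
      (closedBall_subset_closedBall (by linarith))).eventuallyLE
  exact measure_ne_top_of_subset Set.sdiff_subset measure_closedBall_lt_top.ne

theorem Qfun_mono : Monotone (Qfun a b R_p R_I) := by
  intro r r' hrr
  have hS : volume (closedBall a (r' + R_p) \ closedBall b R_I) ≠ ⊤ :=
    measure_ne_top_of_subset Set.sdiff_subset measure_closedBall_lt_top.ne
  calc Qfun a b R_p R_I r
      ≤ ∫ x in closedBall a (r' + R_p) \ closedBall b R_I, lensRatio a R_p r x :=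
        Qfun_le_setIntegral_lensRatio a b R_p R_I hrr
    _ ≤ ∫ x in closedBall a (r' + R_p) \ closedBall b R_I, lensRatio a R_p r' x :=
        setIntegral_mono (integrableOn_lensRatio a R_p r hS) (integrableOn_lensRatio a R_p r' hS)
          fun x => lensRatio_mono a R_p x hrr
    _ = Qfun a b R_p R_I r' := (Qfun_eq_setIntegral_lensRatio a R_p b R_I r').symm

theorem Qfun_lt_Qfun (hRp : 0 < R_p) {r r' : ℝ} (hr : 0 < r) (hrr : r < r')
    (hRI : R_I < dist a b + r' + R_p) : Qfun a b R_p R_I r < Qfun a b R_p R_I r' := by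
  set S := closedBall a (r' + R_p) \ closedBall b R_I
  have hS : volume S ≠ ⊤ :=
    measure_ne_top_of_subset Set.sdiff_subset measure_closedBall_lt_top.ne
  set U := {x | r + R_p < dist x a} ∩ ball a (r' + R_p) ∩ (closedBall b R_I)ᶜ
  have hU_open : IsOpen U :=
    ((isOpen_lt continuous_const (continuous_id.dist continuous_const)).inter isOpen_ball).inter
      isClosed_closedBall.isOpen_compl
  have hU_nonempty : U.Nonempty := by
    obtain ⟨t, ht, ht'⟩ := exists_between
      (max_lt (by linarith : r + R_p < r' + R_p) (by linarith : R_I - dist a b < r' + R_p))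
    obtain ⟨htr, htI⟩ := max_lt_iff.1 ht
    obtain ⟨x, hxa, hxb⟩ := exists_dist_eq_and_dist_eq_dist_add a b (by linarith : 0 ≤ t)
    refine ⟨x, ⟨⟨?_, ?_⟩, ?_⟩⟩ <;>
      simp only [Set.mem_ofPred_eq, mem_ball, Set.mem_compl_iff, mem_closedBall, not_le, hxa,
        hxb] <;>
      linarith
  have hUS : U ⊆ S := fun x hx => ⟨ball_subset_closedBall hx.1.2, hx.2⟩
  have hlt : ∀ x ∈ U, lensRatio a R_p r x < lensRatio a R_p r' x := by
    rintro x ⟨⟨hxr, hxr'⟩, -⟩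
    rw [lensRatio_eq_zero a R_p (by rwa [dist_comm, add_comm])]
    exact lensRatio_pos a R_p hRp (hr.trans hrr) (by rw [mem_ball, dist_comm] at hxr'; linarith)
  calc Qfun a b R_p R_I r
      ≤ ∫ x in S, lensRatio a R_p r x := Qfun_le_setIntegral_lensRatio a b R_p R_I hrr.le
    _ < ∫ x in S, lensRatio a R_p r' x :=
        setIntegral_lt_setIntegral_of_le_of_lt_on
          (measurableSet_closedBall.diff measurableSet_closedBall)
          (integrableOn_lensRatio a R_p r hS) (integrableOn_lensRatio a R_p r' hS)
          (fun x _ => lensRatio_mono a R_p x hrr.le) hUS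
          (hU_open.measure_pos volume hU_nonempty) hlt
    _ = Qfun a b R_p R_I r' := (Qfun_eq_setIntegral_lensRatio a R_p b R_I r').symm

end Qfun

theorem probOpp_strict_anti_general (d R_p R_I μ : ℝ)
    (hRp : 0 < R_p) (hμ : 0 < μ)
    (a b : EuclideanSpace ℝ (Fin 2)) (hab : dist a b = d) :
    AntitoneOn (fun r_I => Real.exp (-μ * (Qfun a b R_p R_I r_I + π * R_I ^ 2)))
      (Set.Ioi (0:ℝ)) ∧
    ∀ r_I r_I' : ℝ, 0 < r_I → r_I < r_I' → R_I < d + r_I' + R_p →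
      Real.exp (-μ * (Qfun a b R_p R_I r_I' + π * R_I ^ 2)) <
        Real.exp (-μ * (Qfun a b R_p R_I r_I + π * R_I ^ 2)) := by
  subst hab
  refine ⟨fun r _ r' _ hrr => ?_, fun r r' hr hrr hRI => ?_⟩
  · exact exp_le_exp.2 (by nlinarith [Qfun_mono a b R_p R_I hrr])
  · exact exp_lt_exp.2 (by nlinarith [Qfun_lt_Qfun a b R_p R_I hRp hr hrr hRI])

/-- T1.1: the closed-form probability of opportunity
`F(r_I) = exp(−μ(Q(r_I) + π R_I²))` is nonincreasing in `r_I` on `(0, ∞)`,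
and strictly decreasing once `d + r_I′ + R_p > R_I`. -/
theorem probOpp_strict_anti (d R_p R_I μ : ℝ)
    (hd : 0 ≤ d) (hRp : 0 < R_p) (hRI : 0 < R_I) (hμ : 0 < μ)
    (a b : EuclideanSpace ℝ (Fin 2)) (hab : dist a b = d) :
    AntitoneOn (fun r_I => Real.exp (-μ * (Qfun a b R_p R_I r_I + π * R_I ^ 2)))
      (Set.Ioi (0:ℝ)) ∧
    ∀ r_I r_I' : ℝ, 0 < r_I → r_I < r_I' → R_I < d + r_I' + R_p →
      Real.exp (-μ * (Qfun a b R_p R_I r_I' + π * R_I ^ 2)) <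
        Real.exp (-μ * (Qfun a b R_p R_I r_I + π * R_I ^ 2)) :=
  probOpp_strict_anti_general d R_p R_I μ hRp hμ a b hab
end

section
/- Fix R_p, R_I > 0 with R_p ≤ R_I, d ≥ 0, and points a, b ∈ ℝ² with dist(a, b) = d. If r_I ≥ d + 2 R_I, then ∫_{D(a, r_I − R_I) \ D(b, R_I)} S_I(‖x − a‖, R_p, r_I)/(π R_p²) dx = π((r_I − R_I)² − R_I²). -/
open MeasureTheory Metric Real

/-! For `x ∈ D(a, r_I − R_I)` the disk of radius `R_p ≤ R_I` around `x` lies inside `D(a, r_I)`,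
so the normalized lens area is identically `1` there and the integral is the area of the region.
Since `r_I ≥ d + 2 R_I`, the disk `D(b, R_I)` lies inside `D(a, r_I − R_I)`, so that area is the
difference of the two disk areas. -/

lemma measureReal_closedBall_fin_two (x : EuclideanSpace ℝ (Fin 2)) {r : ℝ} (hr : 0 ≤ r) :
    volume.real (closedBall x r) = π * r ^ 2 := by
  rw [measureReal_def, EuclideanSpace.volume_closedBall_fin_two, ← ENNReal.ofReal_pow hr,
    ← ENNReal.ofReal_mul (by positivity), ENNReal.toReal_ofReal (by positivity), mul_comm]

lemma measureReal_closedBall_sdiff_closedBall {a b : EuclideanSpace ℝ (Fin 2)} {r s : ℝ}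
    (hs : 0 ≤ s) (h : s + dist b a ≤ r) :
    volume.real (closedBall a r \ closedBall b s) = π * (r ^ 2 - s ^ 2) := by
  have hr : 0 ≤ r := by linarith [dist_nonneg (x := b) (y := a)]
  rw [measureReal_sdiff (closedBall_subset_closedBall' h) measurableSet_closedBall
      measure_closedBall_lt_top.ne,
    measureReal_closedBall_fin_two a hr, measureReal_closedBall_fin_two b hs]
  ring

lemma SI_eq_of_abs_add_le {d r₁ r₂ : ℝ} (hr₁ : 0 ≤ r₁) (h : r₁ + |d| ≤ r₂) :
    SI d r₁ r₂ = π * r₁ ^ 2 := by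
  have hsub : closedBall (0 : EuclideanSpace ℝ (Fin 2)) r₁ ⊆
      closedBall (EuclideanSpace.single 0 d) r₂ := by
    refine closedBall_subset_closedBall' ?_
    rwa [dist_comm, dist_zero_right, PiLp.norm_single, Real.norm_eq_abs]
  rw [SI, Set.inter_eq_left.mpr hsub, ← measureReal_def, measureReal_closedBall_fin_two _ hr₁]

theorem integral_So_large_power_general (R_p R_I d : ℝ)
    (hRp : 0 < R_p) (hRI : 0 < R_I) (hle : R_p ≤ R_I)
    (a b : EuclideanSpace ℝ (Fin 2)) (hab : dist a b = d)
    (r_I : ℝ) (h : d + 2 * R_I ≤ r_I) :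
    (∫ x in closedBall a (r_I - R_I) \ closedBall b R_I,
        SI ‖x - a‖ R_p r_I / (π * R_p ^ 2))
      = π * ((r_I - R_I) ^ 2 - R_I ^ 2) := by
  have h_one : Set.EqOn (fun x ↦ SI ‖x - a‖ R_p r_I / (π * R_p ^ 2)) (fun _ ↦ 1)
      (closedBall a (r_I - R_I) \ closedBall b R_I) := by
    intro x hx
    have hxa : ‖x - a‖ ≤ r_I - R_I := mem_closedBall_iff_norm.mp hx.1
    have h_disk : R_p + |‖x - a‖| ≤ r_I := by rw [abs_norm]; linarith
    simp only [SI_eq_of_abs_add_le hRp.le h_disk, div_self (by positivity : π * R_p ^ 2 ≠ 0)]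
  rw [setIntegral_congr_fun (measurableSet_closedBall.diff measurableSet_closedBall) h_one,
    setIntegral_const, smul_eq_mul, mul_one,
    measureReal_closedBall_sdiff_closedBall hRI.le (by rw [dist_comm, hab]; linarith)]

/-- Key integral identity in the large-power regime of the paper's Theorem 2:
for `r_I ≥ d + 2 R_I` the integral of the normalized lens area over
`D(a, r_I − R_I) \ D(b, R_I)` equals `π((r_I − R_I)² − R_I²)`. -/
theorem integral_So_large_power (R_p R_I d : ℝ)
    (hRp : 0 < R_p) (hRI : 0 < R_I) (hle : R_p ≤ R_I) (hd : 0 ≤ d)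
    (a b : EuclideanSpace ℝ (Fin 2)) (hab : dist a b = d)
    (r_I : ℝ) (h : d + 2 * R_I ≤ r_I) :
    (∫ x in closedBall a (r_I - R_I) \ closedBall b R_I,
        SI ‖x - a‖ R_p r_I / (π * R_p ^ 2))
      = π * ((r_I - R_I) ^ 2 - R_I ^ 2) :=
  integral_So_large_power_general R_p R_I d hRp hRI hle a b hab r_I h
end
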